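/- Let H be a Hilbert space, M an orthogonal projection on H, y in the range of M, and Φ : H → H an L-Lipschitz map with 0 < L < 1. Then the operator T(x) = (I − M)(Φ(x)) + y has a unique fixed point x*, every point of the iteration x_{k+1} = T(x_k) lies in C = {x : M x = y} for k ≥ 1, and ‖x_k − x*‖ ≤ L^k/(1 − L) · ‖x_1 − x_0‖ for all k ≥ 1. -/

import Mathlib

open scoped RealInnerProductSpace

/-!
The map `T = (I - M) ∘ Φ + y` is a contraction: `I - M` is again an orthogonal projection, hence
nonexpansive, so `T` inherits the Lipschitz constant `L < 1` of `Φ`. The Banach fixed point theorem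
gives the unique fixed point and the a priori estimate, and `M ∘ T = y` because `M (I - M) = 0`.
-/

section

variable {𝕜 H : Type*} [RCLike 𝕜] [NormedAddCommGroup H] [InnerProductSpace 𝕜 H]
  [CompleteSpace H]

theorem ContinuousLinearMap.isStarProjection_of_idempotent_of_symmetric {M : H →L[𝕜] H}
    (hidem : ∀ x, M (M x) = M x) (hsymm : ∀ x z, inner 𝕜 (M x) z = inner 𝕜 x (M z)) :
    IsStarProjection M :=
  ⟨ContinuousLinearMap.ext hidem,
    ContinuousLinearMap.isSelfAdjoint_iff_isSymmetric.mpr hsymm⟩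

theorem IsStarProjection.norm_sub_apply_le {M : H →L[𝕜] H}
    (hM : IsStarProjection M) (v : H) : ‖v - M v‖ ≤ ‖v‖ :=
  calc ‖v - M v‖ = ‖(1 - M) v‖ := rfl
    _ ≤ ‖1 - M‖ * ‖v‖ := (1 - M).le_opNorm v
    _ ≤ ‖v‖ := mul_le_of_le_one_left (norm_nonneg v) (hM.one_sub.norm_le)

theorem IsStarProjection.lipschitzWith_sub_apply_add {M : H →L[𝕜] H}
    (hM : IsStarProjection M) {K : NNReal} {Φ : H → H} (hΦ : LipschitzWith K Φ) (y : H) :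
    LipschitzWith K fun x => Φ x - M (Φ x) + y := by
  refine LipschitzWith.of_dist_le_mul fun x x' => ?_
  have hdiff : Φ x - M (Φ x) + y - (Φ x' - M (Φ x') + y) = Φ x - Φ x' - M (Φ x - Φ x') := by
    rw [map_sub]; abel
  rw [dist_eq_norm, hdiff]
  exact (hM.norm_sub_apply_le _).trans (dist_eq_norm (Φ x) (Φ x') ▸ hΦ.dist_le_mul x x')

end

theorem ContinuousLinearMap.apply_sub_apply_add_eq {R E : Type*} [Ring R] [AddCommGroup E]
    [Module R E] [TopologicalSpace E] {M : E →L[R] E} (hM : IsIdempotentElem M) {y : E}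
    (hy : M y = y) (v : E) : M (v - M v + y) = y := by
  have hMM : M (M v) = M v := DFunLike.congr_fun hM.eq v
  rw [map_add, map_sub, hMM, sub_self, zero_add, hy]

theorem deq_pocs_linear_rate
    {H : Type*} [NormedAddCommGroup H] [InnerProductSpace ℝ H] [CompleteSpace H]
    (M : H →L[ℝ] H) (hMidem : ∀ x, M (M x) = M x)
    (hMsa : ∀ x z : H, ⟪M x, z⟫ = ⟪x, M z⟫)
    (y : H) (hy : M y = y)
    (L : ℝ) (hL0 : 0 < L) (hL1 : L < 1)
    (Φ : H → H) (hΦ : ∀ x x', ‖Φ x - Φ x'‖ ≤ L * ‖x - x'‖)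
    (T : H → H) (hT : ∀ x, T x = Φ x - M (Φ x) + y) :
    ∃ xs : H, T xs = xs ∧ (∀ z : H, T z = z → z = xs) ∧
      ∀ x₀ : H,
        (∀ k : ℕ, 1 ≤ k → M (T^[k] x₀) = y) ∧
        (∀ k : ℕ, 1 ≤ k →
          ‖T^[k] x₀ - xs‖ ≤ L ^ k / (1 - L) * ‖T x₀ - x₀‖) := by
  have hM := ContinuousLinearMap.isStarProjection_of_idempotent_of_symmetric hMidem hMsa
  lift L to NNReal using hL0.le
  have hΦL : LipschitzWith L Φ := LipschitzWith.of_dist_le_mul fun x x' => by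
    simpa only [dist_eq_norm] using hΦ x x'
  have hC : ContractingWith L T :=
    ⟨hL1, funext hT ▸ hM.lipschitzWith_sub_apply_add hΦL y⟩
  have : Nonempty H := ⟨0⟩
  refine ⟨hC.fixedPoint, hC.fixedPoint_isFixedPt, fun z hz => hC.fixedPoint_unique hz,
    fun x₀ => ⟨fun k hk => ?_, fun k _ => ?_⟩⟩
  · obtain ⟨j, rfl⟩ := Nat.exists_eq_add_of_le' hk
    rw [Function.iterate_succ_apply', hT]
    exact M.apply_sub_apply_add_eq hM.isIdempotentElem hy _
  · have h := hC.apriori_dist_iterate_fixedPoint_le x₀ k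
    rw [dist_eq_norm, dist_eq_norm, norm_sub_rev x₀] at h
    exact h.trans_eq (by ring)
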